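/- Let A = ℂ[ℤ₂] be the group algebra of ℤ₂ over ℂ, with basis φ₀, φ₁ and χ(a) the trace of left multiplication by a. For β ∈ ℝ let z = (e^β/2)·φ₀ + (e^{−β}/2)·φ₁ ∈ A. Then for all g₁, g₂, g₃, g₄ ∈ ZMod 2, χ(z·φ_{g₁}·φ_{g₂}·φ_{g₃}·φ_{g₄}) = exp( β·(−1)^{g₁+g₂+g₃+g₄} ); i.e., this coloring reproduces the Boltzmann weight e^{−β tr(g₁g₂g₃g₄)} of ℤ₂ lattice gauge theory. -/

import Mathlib

/-!
Left multiplication by `φ_g` permutes the basis of `ℂ[ℤ₂]` without fixed points unless `g = 0`,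
so `χ(a) = 2 a(0)`. Since `φ_{g₁} ⋯ φ_{g₄} = φ_s` with `s = g₁ + g₂ + g₃ + g₄` and `-s = s`,
`χ(z φ_s) = 2 z(s)`, which is `e^β` for `s = 0` and `e^{-β}` for `s = 1`.
-/

noncomputable section

/-- The group algebra ℂ[ℤ₂]. -/
abbrev GA : Type := AddMonoidAlgebra ℂ (ZMod 2)

/-- The basis element φ_g of ℂ[ℤ₂]. -/
def phi (g : ZMod 2) : GA := AddMonoidAlgebra.single g 1

/-- The trace character χ(a) = trace of left multiplication by a. -/
def chiGA : GA →ₗ[ℂ] ℂ := (LinearMap.trace ℂ GA) ∘ₗ (LinearMap.mul ℂ GA)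

open AddMonoidAlgebra

theorem AddMonoidAlgebra.trace_mul_left {k G : Type*} [CommSemiring k] [AddGroup G] [Fintype G]
    (a : k[G]) :
    LinearMap.trace k _ (LinearMap.mul k _ a) = Fintype.card G * a.coeff 0 := by
  classical
  rw [LinearMap.trace_eq_matrix_trace k (basis G k), Matrix.trace]
  simp only [Matrix.diag, LinearMap.toMatrix_apply, basis_apply, LinearMap.mul_apply']
  change ∑ i, (a * single i 1).coeff i = _
  simp

lemma phi_mul (g h : ZMod 2) : phi g * phi h = phi (g + h) := by
  simp [phi, single_mul_single]

lemma chiGA_apply (a : GA) : chiGA a = 2 * a.coeff 0 := by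
  simp [chiGA, trace_mul_left]

theorem gauge_boltzmann_weight (β : ℝ) (g₁ g₂ g₃ g₄ : ZMod 2) :
    chiGA ((((Real.exp β : ℂ) / 2) • phi 0 + ((Real.exp (-β) : ℂ) / 2) • phi 1) *
        phi g₁ * phi g₂ * phi g₃ * phi g₄) =
      Complex.exp ((β : ℂ) * (-1 : ℂ) ^ (g₁ + g₂ + g₃ + g₄).val) := by
  set z := ((Real.exp β : ℂ) / 2) • phi 0 + ((Real.exp (-β) : ℂ) / 2) • phi 1
  have hprod : z * phi g₁ * phi g₂ * phi g₃ * phi g₄ = z * phi (g₁ + g₂ + g₃ + g₄) := by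
    simp only [mul_assoc, phi_mul, add_assoc]
  rw [hprod, chiGA_apply, phi, coeff_mul_single_apply, zero_add, ZMod.neg_eq_self_mod_two, mul_one]
  obtain hs | hs : g₁ + g₂ + g₃ + g₄ = 0 ∨ g₁ + g₂ + g₃ + g₄ = 1 := by
    generalize g₁ + g₂ + g₃ + g₄ = s; revert s; decide
  all_goals simp [hs, z, phi, Complex.ofReal_exp, ZMod.val_one, mul_div_cancel₀]

end
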